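/- arXiv:2002.09073 — 3 statements merged into one kernel-verified Lean document; each statement's English description precedes it below -/
import Mathlib

section
/- Improved approximation factor under exponential spectral decay. There exists an absolute constant c > 0 such that the following holds. Let A be an m×n real matrix whose eigenvalues λ₁ ≥ ... ≥ λ_n of AᵀA satisfy c₁·(1−δ)^i ≤ λ_i ≤ c₂·(1−δ)^i for all i ∈ {1,...,n}, where δ ∈ (0,1) and 0 < c₁ ≤ c₂, and set γ = c₂/c₁. Then for every integer k with 1 ≤ k ≤ n−1, if S ~ k-DPP(AᵀA), then E[Er_A(S)] ≤ c·γ·(1 + δk)·OPT_k. -/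
open scoped BigOperators
open Matrix

namespace CSSP

variable {m n : ℕ}

/-- The `j`-th column of `A` as a vector in Euclidean space. -/
noncomputable def col {ι : Type*} (A : Matrix (Fin m) ι ℝ) (j : ι) :
    EuclideanSpace ℝ (Fin m) := WithLp.toLp 2 (fun i => A i j)

/-- The span of the columns of `A` indexed by `S`. -/
noncomputable def colSpan {ι : Type*} (A : Matrix (Fin m) ι ℝ) (S : Finset ι) :
    Submodule ℝ (EuclideanSpace ℝ (Fin m)) :=
  Submodule.span ℝ {x | ∃ j ∈ S, x = col A j}

/-- `Er_A(S) = ‖A - P_S A‖_F²`, the squared Frobenius norm of the residual of projecting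
the columns of `A` onto the span of the columns indexed by `S`. -/
noncomputable def Er {ι : Type*} [Fintype ι] (A : Matrix (Fin m) ι ℝ) (S : Finset ι) : ℝ :=
  ∑ j, ‖col A j - (Submodule.orthogonalProjectionOnto (colSpan A S) (col A j) : EuclideanSpace ℝ (Fin m))‖ ^ 2

/-- Principal subdeterminant `det K_{S,S}`. -/
noncomputable def pdet (K : Matrix (Fin n) (Fin n) ℝ) (S : Finset (Fin n)) : ℝ :=
  (K.submatrix (fun i : {x : Fin n // x ∈ S} => (i : Fin n))
    (fun i : {x : Fin n // x ∈ S} => (i : Fin n))).det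

/-- Expectation of `f` under the `k`-DPP with kernel `AᵀA`. -/
noncomputable def kDPPExp (A : Matrix (Fin m) (Fin n) ℝ) (k : ℕ)
    (f : Finset (Fin n) → ℝ) : ℝ :=
  (∑ S ∈ Finset.univ.filter (fun S : Finset (Fin n) => S.card = k), pdet (Aᵀ * A) S * f S) /
    (∑ S ∈ Finset.univ.filter (fun S : Finset (Fin n) => S.card = k), pdet (Aᵀ * A) S)

/-- Expectation of `f` under the (random-size) DPP with kernel `(1/α)·AᵀA`. -/
noncomputable def dppExp (A : Matrix (Fin m) (Fin n) ℝ) (α : ℝ)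
    (f : Finset (Fin n) → ℝ) : ℝ :=
  (∑ S : Finset (Fin n), α⁻¹ ^ S.card * pdet (Aᵀ * A) S * f S) /
    (1 + α⁻¹ • (Aᵀ * A)).det

/-- `lam` is the (multi-)set of eigenvalues of the symmetric matrix `K`. -/
def IsEigs (K : Matrix (Fin n) (Fin n) ℝ) (lam : Fin n → ℝ) : Prop :=
  ∃ (hK : K.IsHermitian) (σ : Equiv.Perm (Fin n)), ∀ i, lam i = hK.eigenvalues (σ i)

/-- `OPT_k = Σ_{i > k} λ_i` (1-based indexing in the paper; `lam` here is 0-based). -/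
noncomputable def opt (lam : Fin n → ℝ) (k : ℕ) : ℝ :=
  ∑ i ∈ Finset.univ.filter (fun i : Fin n => k ≤ (i : ℕ)), lam i

/-- Stable rank of order `s`: `sr_s = (Σ_{i > s} λ_i)/λ_{s+1}`. -/
noncomputable def srank (lam : Fin n → ℝ) (s : ℕ) (h : s < n) : ℝ :=
  (∑ i ∈ Finset.univ.filter (fun i : Fin n => s ≤ (i : ℕ)), lam i) / lam ⟨s, h⟩

/-- Squared Frobenius norm. -/
noncomputable def frobSq {ι : Type*} [Fintype ι] (M : Matrix (Fin m) ι ℝ) : ℝ :=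
  ∑ i, ∑ j, M i j ^ 2

/-- The squared Frobenius error of the best rank-`k` approximation of `A`. -/
noncomputable def optRank {ι : Type*} [Fintype ι] [DecidableEq ι]
    (A : Matrix (Fin m) ι ℝ) (k : ℕ) : ℝ :=
  sInf {x | ∃ B : Matrix (Fin m) ι ℝ, B.rank ≤ k ∧ x = frobSq (A - B)}

/-!
For a `k`-DPP with kernel `AᵀA`, the Gram-determinant identity
`det K_{S ∪ {j}} = det K_S · dist(a_j, span a_S)²` turns `Σ_{|S|=k} det K_S · Er_A(S)` into
`(k+1) Σ_{|T|=k+1} det K_T`, and sums of principal minors are elementary symmetric polynomials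
`e_j` of the eigenvalues; hence `E[Er_A(S)] = (k+1) e_{k+1}(λ) / e_k(λ)`.

The ratio `e_{k+1} / e_k` is monotone in every variable on the nonnegative orthant (a strong form
of Newton's inequalities, proved by adding one variable at a time), so `λ ≤ c₂ ν` with
`ν_i = (1-δ)^i` bounds it by `c₂ e_{k+1}(ν) / e_k(ν)`. For the geometric sequence the
`q`-binomial recursion gives `e_{k+1}(ν) / e_k(ν) = δ Σ_{i>k} ν_i / (1 - (1-δ)^{k+1})`, and
`OPT_k ≥ c₁ Σ_{i>k} ν_i` together with Bernoulli's inequality yields the constant `2`.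
-/

open Finset Submodule

theorem det_updateRow_inr_single {R κ : Type*} [CommRing R] [Fintype κ] [DecidableEq κ]
    (M : Matrix (κ ⊕ Unit) (κ ⊕ Unit) R) (c : R) :
    (M.updateRow (.inr ()) (Pi.single (.inr ()) c)).det = M.toBlocks₁₁.det * c := by
  have hM : M.updateRow (.inr ()) (Pi.single (.inr ()) c) =
      fromBlocks M.toBlocks₁₁ M.toBlocks₁₂ 0 (of fun _ _ => c) := by
    ext (i | i) (j | j) <;> simp [toBlocks₁₁, toBlocks₁₂, updateRow_apply]
  rw [hM, det_fromBlocks_zero₂₁, det_unique (of fun (_ : Unit) (_ : Unit) => c)]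
  rfl

section Gram

variable {E : Type*} [NormedAddCommGroup E] [InnerProductSpace ℝ E]

theorem det_gram_sum_elim {κ : Type*} [Fintype κ] [DecidableEq κ] (v : κ → E) (w : E)
    [(span ℝ (Set.range v)).HasOrthogonalProjection] :
    (gram ℝ (Sum.elim v fun _ : Unit => w)).det =
      (gram ℝ v).det * ‖w - (span ℝ (Set.range v)).starProjection w‖ ^ 2 := by
  set K := span ℝ (Set.range v)
  set p := K.starProjection w
  set r := w - p
  have hp : p ∈ K := K.starProjection_apply_mem w
  have hr : ∀ x ∈ K, inner ℝ x r = 0 :=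
    (K.mem_orthogonal r).1 (K.sub_starProjection_mem_orthogonal w)
  have hv : ∀ a, inner ℝ (v a) r = 0 := fun a => hr _ (subset_span ⟨a, rfl⟩)
  have hw : w = p + r := (add_sub_cancel p w).symm
  -- Replacing `w` by its projection `p` changes the Gram matrix only in the corner entry.
  have hG : gram ℝ (Sum.elim v fun _ : Unit => w) =
      (gram ℝ (Sum.elim v fun _ : Unit => p)).updateRow (.inr ())
        (gram ℝ (Sum.elim v fun _ : Unit => p) (.inr ()) + Pi.single (.inr ()) (‖r‖ ^ 2)) := by
    ext (i | i) (j | j) <;>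
      simp [gram_apply, updateRow_apply, hw, inner_add_left, inner_add_right, real_inner_comm, hv,
        hr p hp, norm_add_sq_real]
  have hdep : (gram ℝ (Sum.elim v fun _ : Unit => p)).det = 0 := by
    by_contra h
    obtain ⟨-, hpLI, hdisj⟩ :=
      linearIndependent_sum.1 (det_gram_ne_zero_iff_linearIndependent.1 h)
    exact linearIndependent_unique_iff.1 hpLI
      (disjoint_def.1 hdisj p (by simpa using hp) (subset_span ⟨(), rfl⟩))
  rw [hG, det_updateRow_add, updateRow_eq_self, hdep, zero_add, det_updateRow_inr_single]
  rfl

end Gram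

theorem transpose_mul_self_eq_gram {ι : Type*} [Fintype ι] (A : Matrix (Fin m) ι ℝ) :
    Aᵀ * A = gram ℝ (col A) := by
  ext i j
  simp [mul_apply, gram_apply, col, PiLp.inner_apply, mul_comm]

theorem pdet_transpose_mul_self_eq_det_gram (A : Matrix (Fin m) (Fin n) ℝ)
    (S : Finset (Fin n)) :
    pdet (Aᵀ * A) S = (gram ℝ fun i : S => col A i).det := by
  rw [pdet, transpose_mul_self_eq_gram]
  rfl

theorem span_range_col_eq_colSpan {ι : Type*} (A : Matrix (Fin m) ι ℝ) (S : Finset ι) :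
    span ℝ (Set.range fun i : S => col A i) = colSpan A S := by
  rw [colSpan]
  congr 1
  ext x
  simp [eq_comm]

theorem pdet_insert (A : Matrix (Fin m) (Fin n) ℝ) {S : Finset (Fin n)} {j : Fin n}
    (hj : j ∉ S) :
    pdet (Aᵀ * A) (insert j S) =
      pdet (Aᵀ * A) S * ‖col A j - (colSpan A S).starProjection (col A j)‖ ^ 2 := by
  let e : S ⊕ Unit ≃ (insert j S : Finset (Fin n)) :=
    ((subtypeInsertEquivOption hj).trans (Equiv.optionEquivSumPUnit _)).symm
  have he : (fun i : (insert j S : Finset (Fin n)) => col A i) ∘ e =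
      Sum.elim (fun i : S => col A i) fun _ => col A j := by
    ext (i | i) : 1 <;> simp [e, subtypeInsertEquivOption]
  rw [pdet_transpose_mul_self_eq_det_gram, pdet_transpose_mul_self_eq_det_gram,
    ← det_submatrix_equiv_self e, ← span_range_col_eq_colSpan, ← det_gram_sum_elim, ← he]
  rfl

theorem pdet_mul_Er (A : Matrix (Fin m) (Fin n) ℝ) (S : Finset (Fin n)) :
    pdet (Aᵀ * A) S * Er A S = ∑ j ∈ Sᶜ, pdet (Aᵀ * A) (insert j S) := by
  have hmem : ∀ j ∈ S, col A j - (colSpan A S).starProjection (col A j) = 0 := fun j hj =>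
    sub_eq_zero.2 (starProjection_eq_self_iff.2
      (subset_span ⟨j, hj, rfl⟩ : col A j ∈ colSpan A S)).symm
  simp only [Er, ← starProjection_apply, mul_sum]
  rw [← sum_compl_add_sum S, sum_eq_zero (s := S) fun j hj => by simp [hmem j hj], add_zero]
  exact sum_congr rfl fun j hj => (pdet_insert A (mem_compl.1 hj)).symm

theorem sum_sum_compl_insert {α M : Type*} [Fintype α] [DecidableEq α] [AddCommMonoid M]
    (f : Finset α → M) (k : ℕ) :
    ∑ S ∈ univ.filter (fun S : Finset α => S.card = k), ∑ j ∈ Sᶜ, f (insert j S) =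
      (k + 1) • ∑ T ∈ univ.filter (fun T : Finset α => T.card = k + 1), f T := by
  have hT : ∀ T ∈ univ.filter (fun T : Finset α => T.card = k + 1),
      (k + 1) • f T = ∑ _j ∈ T, f T :=
    fun T hT => by rw [sum_const, (mem_filter.1 hT).2]
  rw [smul_sum, sum_congr rfl hT, sum_sigma', sum_sigma']
  refine sum_nbij' (fun p => ⟨insert p.2 p.1, p.2⟩) (fun p => ⟨p.1.erase p.2, p.2⟩)
    ?_ ?_ ?_ ?_ fun _ _ => rfl
  · rintro ⟨S, j⟩ h
    simp only [mem_sigma, mem_filter, mem_univ, true_and, mem_compl] at h ⊢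
    exact ⟨by rw [card_insert_of_notMem h.2, h.1], mem_insert_self j S⟩
  · rintro ⟨T, j⟩ h
    simp only [mem_sigma, mem_filter, mem_univ, true_and, mem_compl] at h ⊢
    exact ⟨by rw [card_erase_of_mem h.2, h.1, Nat.add_sub_cancel], notMem_erase j T⟩
  · rintro ⟨S, j⟩ h
    simp only [mem_sigma, mem_compl] at h
    simp [erase_insert h.2]
  · rintro ⟨T, j⟩ h
    simp only [mem_sigma] at h
    simp [insert_erase h.2]

theorem sum_pdet_eq_esymm_eigenvalues {K : Matrix (Fin n) (Fin n) ℝ} (hK : K.IsHermitian)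
    {j : ℕ} (hj : j ≤ n) :
    ∑ S ∈ univ.filter (fun S : Finset (Fin n) => S.card = j), pdet K S =
      (univ.val.map hK.eigenvalues).esymm j := by
  have hcoeff := K.charpoly_coeff_eq_sum_minors j (by simpa using hj)
  have hprod : K.charpoly = (((univ.val.map hK.eigenvalues).map Neg.neg).map
      fun r => Polynomial.X + Polynomial.C r).prod := by
    rw [hK.charpoly_eq, prod_eq_multiset_prod, Multiset.map_map, Multiset.map_map]
    simp [Function.comp_def, sub_eq_add_neg]
  rw [hprod, Multiset.prod_X_add_C_coeff _ (by simp)] at hcoeff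
  simp only [Multiset.card_map, card_val, card_univ, Fintype.card_fin, Nat.sub_sub_self hj]
    at hcoeff
  rw [Multiset.esymm_neg, powersetCard_eq_filter, powerset_univ] at hcoeff
  exact (mul_left_cancel₀ (pow_ne_zero j (neg_ne_zero.2 one_ne_zero)) hcoeff).symm

theorem IsEigs.sum_pdet_eq_esymm {K : Matrix (Fin n) (Fin n) ℝ} {lam : Fin n → ℝ}
    (hlam : IsEigs K lam) {j : ℕ} (hj : j ≤ n) :
    ∑ S ∈ univ.filter (fun S : Finset (Fin n) => S.card = j), pdet K S =
      (univ.val.map lam).esymm j := by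
  obtain ⟨hK, σ, hσ⟩ := hlam
  rw [sum_pdet_eq_esymm_eigenvalues hK hj, funext hσ, ← Function.comp_def, ← Multiset.map_map,
    Multiset.map_univ_val_equiv]

theorem kDPPExp_Er_eq {A : Matrix (Fin m) (Fin n) ℝ} {lam : Fin n → ℝ}
    (hlam : IsEigs (Aᵀ * A) lam) {k : ℕ} (hkn : k < n) :
    kDPPExp A k (Er A) =
      (k + 1) * (univ.val.map lam).esymm (k + 1) / (univ.val.map lam).esymm k := by
  rw [kDPPExp, sum_congr rfl fun S _ => pdet_mul_Er A S, sum_sum_compl_insert, nsmul_eq_mul,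
    hlam.sum_pdet_eq_esymm hkn, hlam.sum_pdet_eq_esymm hkn.le]
  push_cast
  rfl

theorem esymm_zero {R : Type*} [CommSemiring R] (s : Multiset R) : s.esymm 0 = 1 := by
  simp [Multiset.esymm]

theorem esymm_cons_succ {R : Type*} [CommSemiring R] (a : R) (s : Multiset R) (j : ℕ) :
    (a ::ₘ s).esymm (j + 1) = s.esymm (j + 1) + a * s.esymm j := by
  simp [Multiset.esymm, Multiset.map_map, Multiset.sum_map_mul_left]

theorem esymm_nonneg {s : Multiset ℝ} (hs : ∀ x ∈ s, 0 ≤ x) (k : ℕ) : 0 ≤ s.esymm k :=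
  Multiset.sum_nonneg fun _ hp => by
    obtain ⟨t, ht, rfl⟩ := Multiset.mem_map.1 hp
    exact Multiset.prod_nonneg fun x hx =>
      hs x (Multiset.mem_of_le (Multiset.mem_powersetCard.1 ht).1 hx)

theorem esymm_map_val_pos {ι : Type*} {x : ι → ℝ} {F : Finset ι} (hx : ∀ i ∈ F, 0 < x i)
    {k : ℕ} (hk : k ≤ F.card) : 0 < (F.val.map x).esymm k := by
  rw [Finset.esymm_map_val]
  exact sum_pos (fun t ht => prod_pos fun i hi => hx i ((mem_powersetCard.1 ht).1 hi))
    (powersetCard_nonempty.2 hk)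

theorem esymm_map_val_const_mul {ι : Type*} (c : ℝ) (x : ι → ℝ) (F : Finset ι) (k : ℕ) :
    (F.val.map fun i => c * x i).esymm k = c ^ k * (F.val.map x).esymm k := by
  rw [← smul_eq_mul, Multiset.pow_smul_esymm, Multiset.map_map]
  rfl

/-- `Multiset.esymm` extended by zero to negative indices, so that adding an element `a` acts as
`e ↦ e + a • e(· - 1)` at every index. -/
noncomputable def esymmInt (s : Multiset ℝ) (j : ℤ) : ℝ :=
  if j < 0 then 0 else s.esymm j.toNat

theorem esymmInt_natCast (s : Multiset ℝ) (j : ℕ) : esymmInt s j = s.esymm j := by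
  simp [esymmInt]

theorem esymmInt_zero (j : ℤ) : esymmInt 0 j = if j = 0 then 1 else 0 := by
  unfold esymmInt
  rcases lt_trichotomy j 0 with h | rfl | h
  · simp [h, h.ne]
  · simp [esymm_zero]
  · obtain ⟨m, rfl⟩ : ∃ m : ℕ, j = m + 1 := ⟨j.toNat - 1, by omega⟩
    simp [h.ne', show ¬((m : ℤ) + 1 < 0) by omega, Multiset.esymm,
      Multiset.powersetCard_zero_right]

theorem esymmInt_cons (a : ℝ) (s : Multiset ℝ) :
    esymmInt (a ::ₘ s) = fun j => esymmInt s j + a * esymmInt s (j - 1) := by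
  funext j
  rcases lt_trichotomy j 0 with h | rfl | h
  · simp [esymmInt, h, show j - 1 < 0 by omega]
  · simp [esymmInt, esymm_zero]
  · obtain ⟨m, rfl⟩ : ∃ m : ℕ, j = m + 1 := ⟨j.toNat - 1, by omega⟩
    rw [add_sub_cancel_right]
    exact_mod_cast esymm_cons_succ a s m

/-- `X (j + p) / X j ≤ Y (i + p) / Y i` whenever `i ≤ j`, with denominators cleared. -/
def RatioDominated (X Y : ℤ → ℝ) : Prop :=
  ∀ (p : ℕ) (i j : ℤ), i ≤ j → X (j + p) * Y i ≤ X j * Y (i + p)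

theorem RatioDominated.add_mul_shift {X Y : ℤ → ℝ} (h : RatioDominated X Y) {s u : ℝ}
    (hs : 0 ≤ s) (hsu : s ≤ u) :
    RatioDominated (fun j => X j + s * X (j - 1)) (fun j => Y j + u * Y (j - 1)) := by
  intro p i j hij
  rcases p with _ | p
  · simp only [Nat.cast_zero, add_zero, le_refl]
  -- After expanding, the constant and `s * u` terms are `h₀` and `h₁`; the cross terms
  -- `u X(j+p+1) Y(i-1) + s X(j+p) Y(i) ≤ u X(j) Y(i+p) + s X(j-1) Y(i+p+1)` follow from
  -- `h₂`, `h₃`, `h₄` after splitting `u = s + (u - s)`.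
  have h₀ := h (p + 1) i j hij
  have h₁ := h (p + 1) (i - 1) (j - 1) (by omega)
  have h₂ := h (p + 1) (i - 1) j (by omega)
  have h₃ := h (p + 2) (i - 1) (j - 1) (by omega)
  have h₄ := h p i j hij
  have := mul_le_mul_of_nonneg_left h₁ (mul_nonneg hs (hs.trans hsu))
  have := mul_le_mul_of_nonneg_left h₂ (sub_nonneg.2 hsu)
  have := mul_le_mul_of_nonneg_left h₃ hs
  have := mul_le_mul_of_nonneg_left h₄ hs
  push_cast at *
  ring_nf at *
  linarith

theorem ratioDominated_esymmInt_zero : RatioDominated (esymmInt 0) (esymmInt 0) := by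
  intro p i j hij
  simp only [esymmInt_zero]
  split_ifs <;> first | omega | norm_num

theorem ratioDominated_esymmInt_map {ι : Type*} {x y : ι → ℝ} {F : Finset ι}
    (hxy : ∀ i ∈ F, 0 ≤ x i ∧ x i ≤ y i) :
    RatioDominated (esymmInt (F.val.map x)) (esymmInt (F.val.map y)) := by
  induction F using Finset.cons_induction with
  | empty => exact ratioDominated_esymmInt_zero
  | cons a F ha ih =>
    simp only [Finset.cons_val, Multiset.map_cons, esymmInt_cons]
    obtain ⟨hx, hxy'⟩ := hxy a (mem_cons_self a F)
    exact (ih fun i hi => hxy i (mem_cons_of_mem hi)).add_mul_shift hx hxy'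

theorem esymm_succ_mul_esymm_le {ι : Type*} {x y : ι → ℝ} {F : Finset ι}
    (hxy : ∀ i ∈ F, 0 ≤ x i ∧ x i ≤ y i) (k : ℕ) :
    (F.val.map x).esymm (k + 1) * (F.val.map y).esymm k ≤
      (F.val.map x).esymm k * (F.val.map y).esymm (k + 1) := by
  have h := ratioDominated_esymmInt_map hxy 1 k k le_rfl
  rwa [Nat.cast_one, ← Nat.cast_add_one, esymmInt_natCast, esymmInt_natCast, esymmInt_natCast,
    esymmInt_natCast] at h

theorem esymm_succ_mul_esymm_le_const_mul {ι : Type*} {x y : ι → ℝ} {F : Finset ι} {c : ℝ}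
    (hc : 0 < c) (hxy : ∀ i ∈ F, 0 ≤ x i ∧ x i ≤ c * y i) (k : ℕ) :
    (F.val.map x).esymm (k + 1) * (F.val.map y).esymm k ≤
      c * (F.val.map x).esymm k * (F.val.map y).esymm (k + 1) := by
  have h := esymm_succ_mul_esymm_le hxy k
  rw [esymm_map_val_const_mul, esymm_map_val_const_mul] at h
  refine le_of_mul_le_mul_left ?_ (pow_pos hc k)
  calc c ^ k * ((F.val.map x).esymm (k + 1) * (F.val.map y).esymm k)
      = (F.val.map x).esymm (k + 1) * (c ^ k * (F.val.map y).esymm k) := by ring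
    _ ≤ (F.val.map x).esymm k * (c ^ (k + 1) * (F.val.map y).esymm (k + 1)) := h
    _ = c ^ k * (c * (F.val.map x).esymm k * (F.val.map y).esymm (k + 1)) := by ring

theorem esymm_geom_succ_mul (q : ℝ) (n k : ℕ) :
    ((Multiset.range n).map fun i => q ^ (i + 1)).esymm (k + 1) * (1 - q ^ (k + 1)) =
      ((Multiset.range n).map fun i => q ^ (i + 1)).esymm k * (q ^ (k + 1) - q ^ (n + 1)) := by
  induction n generalizing k with
  | zero => rcases k with _ | k <;> simp [Multiset.esymm, Multiset.powersetCard_zero_right]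
  | succ n ih =>
    rw [Multiset.range_succ, Multiset.map_cons]
    rcases k with _ | k
    · have h := ih 0
      rw [esymm_zero] at h
      rw [esymm_cons_succ, esymm_zero, esymm_zero]
      linear_combination h
    · rw [esymm_cons_succ, esymm_cons_succ]
      linear_combination ih (k + 1) + q ^ (n + 2) * ih k

theorem one_sub_mul_sum_Ico_pow_succ (q : ℝ) {k n : ℕ} (hkn : k ≤ n) :
    (1 - q) * ∑ i ∈ Ico k n, q ^ (i + 1) = q ^ (k + 1) - q ^ (n + 1) := by
  simp only [pow_succ, ← sum_mul]
  linear_combination -q * geom_sum_Ico_mul q hkn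

theorem one_sub_pow_mul_one_add_mul_le_one {δ : ℝ} (hδ₀ : 0 ≤ δ) (hδ₁ : δ ≤ 1) (m : ℕ) :
    (1 - δ) ^ m * (1 + m * δ) ≤ 1 :=
  calc (1 - δ) ^ m * (1 + m * δ) ≤ (1 - δ) ^ m * (1 + δ) ^ m :=
        mul_le_mul_of_nonneg_left (one_add_mul_le_pow (by linarith) m) (by positivity)
    _ = (1 - δ ^ 2) ^ m := by rw [← mul_pow]; ring
    _ ≤ 1 := pow_le_one₀ (by nlinarith) (by nlinarith)

theorem succ_mul_le_two_mul_one_sub_pow {δ : ℝ} (hδ₀ : 0 ≤ δ) (hδ₁ : δ ≤ 1) (k : ℕ) :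
    (k + 1) * δ ≤ 2 * (1 + δ * k) * (1 - (1 - δ) ^ (k + 1)) := by
  have h := one_sub_pow_mul_one_add_mul_le_one hδ₀ hδ₁ (k + 1)
  have hq : (1 - δ) ^ (k + 1) ≤ 1 := pow_le_one₀ (by linarith) (by linarith)
  have hk : (0 : ℝ) ≤ k := k.cast_nonneg
  push_cast at h
  nlinarith [mul_nonneg (by nlinarith : 0 ≤ 1 + δ * k - δ) (sub_nonneg.2 hq)]

theorem Fin.univ_val_map_val (f : ℕ → ℝ) (n : ℕ) :
    (univ : Finset (Fin n)).val.map (fun i : Fin n => f i) = (Multiset.range n).map f := by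
  rw [← Function.comp_def, ← Multiset.map_map, Fin.univ_val_map, List.ofFn_eq_map,
    List.map_coe_finRange_eq_range]
  rfl

theorem Fin.sum_filter_le_val (f : ℕ → ℝ) (n k : ℕ) :
    ∑ i ∈ univ.filter (fun i : Fin n => k ≤ (i : ℕ)), f i = ∑ i ∈ Ico k n, f i := by
  rw [sum_filter, Fin.sum_univ_eq_sum_range (fun i => if k ≤ i then f i else 0), ← sum_filter]
  congr 1
  ext i
  simp [and_comm]

theorem succ_mul_esymm_geom_le {δ : ℝ} (hδ₀ : 0 < δ) (hδ₁ : δ ≤ 1) {n k : ℕ} (hkn : k ≤ n) :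
    (k + 1) * (univ.val.map fun i : Fin n => (1 - δ) ^ ((i : ℕ) + 1)).esymm (k + 1) ≤
      2 * (1 + δ * k) * opt (fun i : Fin n => (1 - δ) ^ ((i : ℕ) + 1)) k *
        (univ.val.map fun i : Fin n => (1 - δ) ^ ((i : ℕ) + 1)).esymm k := by
  rw [Fin.univ_val_map_val (fun i => (1 - δ) ^ (i + 1)), opt,
    Fin.sum_filter_le_val (fun i => (1 - δ) ^ (i + 1))]
  set N := fun j => ((Multiset.range n).map fun i => (1 - δ) ^ (i + 1)).esymm j
  set T := ∑ i ∈ Ico k n, (1 - δ) ^ (i + 1)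
  have hq : 0 < 1 - (1 - δ) ^ (k + 1) :=
    sub_pos.2 (pow_lt_one₀ (by linarith) (by linarith) k.succ_ne_zero)
  have hN : 0 ≤ N k := esymm_nonneg (fun _ hx => by
    obtain ⟨i, -, rfl⟩ := Multiset.mem_map.1 hx
    exact pow_nonneg (by linarith) _) k
  have hT : 0 ≤ T := sum_nonneg fun i _ => pow_nonneg (by linarith) _
  refine le_of_mul_le_mul_right ?_ hq
  calc (k + 1) * N (k + 1) * (1 - (1 - δ) ^ (k + 1))
      = (k + 1) * δ * (T * N k) := by
        rw [mul_assoc, esymm_geom_succ_mul, ← one_sub_mul_sum_Ico_pow_succ _ hkn]; ring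
    _ ≤ 2 * (1 + δ * k) * (1 - (1 - δ) ^ (k + 1)) * (T * N k) :=
        mul_le_mul_of_nonneg_right (succ_mul_le_two_mul_one_sub_pow hδ₀.le hδ₁ k)
          (mul_nonneg hT hN)
    _ = 2 * (1 + δ * k) * T * N k * (1 - (1 - δ) ^ (k + 1)) := by ring

theorem succ_mul_esymm_le_of_geom_bounds {n : ℕ} {lam : Fin n → ℝ} {δ c₁ c₂ : ℝ}
    (hδ₀ : 0 < δ) (hδ₁ : δ < 1) (hc₁ : 0 < c₁)
    (hband : ∀ i : Fin n,
      c₁ * (1 - δ) ^ ((i : ℕ) + 1) ≤ lam i ∧ lam i ≤ c₂ * (1 - δ) ^ ((i : ℕ) + 1))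
    {k : ℕ} (hkn : k < n) :
    (k + 1) * (univ.val.map lam).esymm (k + 1) ≤
      2 * (c₂ / c₁) * (1 + δ * k) * opt lam k * (univ.val.map lam).esymm k := by
  set ν : Fin n → ℝ := fun i => (1 - δ) ^ ((i : ℕ) + 1)
  set L := fun j => (univ.val.map lam).esymm j
  set N := fun j => (univ.val.map ν).esymm j
  have hν : ∀ i, 0 < ν i := fun i => pow_pos (by linarith) _
  have hlam : ∀ i, 0 < lam i := fun i => (mul_pos hc₁ (hν i)).trans_le (hband i).1
  have hc₂ : 0 < c₂ := pos_of_mul_pos_left ((hlam ⟨k, hkn⟩).trans_le (hband _).2) (hν _).le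
  have hL : 0 ≤ L k := (esymm_map_val_pos (fun i _ => hlam i) (by simpa using hkn.le)).le
  have hN : 0 < N k := esymm_map_val_pos (fun i _ => hν i) (by simpa using hkn.le)
  have hcomp : L (k + 1) * N k ≤ c₂ * L k * N (k + 1) :=
    esymm_succ_mul_esymm_le_const_mul hc₂ (fun i _ => ⟨(hlam i).le, (hband i).2⟩) k
  have hgeom : (k + 1) * N (k + 1) ≤ 2 * (1 + δ * k) * opt ν k * N k :=
    succ_mul_esymm_geom_le hδ₀ hδ₁.le hkn.le
  have hopt : c₂ * opt ν k ≤ c₂ / c₁ * opt lam k :=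
    calc c₂ * opt ν k = c₂ / c₁ * (c₁ * opt ν k) := by field_simp
      _ ≤ c₂ / c₁ * opt lam k := by
          gcongr
          rw [opt, opt, mul_sum]
          exact sum_le_sum fun i _ => (hband i).1
  have hmain : (k + 1) * L (k + 1) ≤ 2 * (1 + δ * k) * (c₂ * opt ν k) * L k := by
    refine le_of_mul_le_mul_right ?_ hN
    calc (k + 1) * L (k + 1) * N k ≤ (k + 1) * (c₂ * L k * N (k + 1)) := by
          rw [mul_assoc]; gcongr
      _ = c₂ * L k * ((k + 1) * N (k + 1)) := by ring
      _ ≤ c₂ * L k * (2 * (1 + δ * k) * opt ν k * N k) := by gcongr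
      _ = 2 * (1 + δ * k) * (c₂ * opt ν k) * L k * N k := by ring
  calc (k + 1) * L (k + 1) ≤ 2 * (1 + δ * k) * (c₂ * opt ν k) * L k := hmain
    _ ≤ 2 * (1 + δ * k) * (c₂ / c₁ * opt lam k) * L k := by gcongr
    _ = 2 * (c₂ / c₁) * (1 + δ * k) * opt lam k * L k := by ring

/-- Improved approximation factor under exponential spectral decay:
if `c₁·(1−δ)^i ≤ λ_i ≤ c₂·(1−δ)^i` with `δ ∈ (0,1)`, then for `S ~ k-DPP(AᵀA)`,
`E[Er_A(S)] ≤ c·γ·(1 + δk)·OPT_k` where `γ = c₂/c₁` and `c` is an absolute constant. -/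
theorem exp_decay :
    ∃ c : ℝ, 0 < c ∧
      ∀ (m n : ℕ) (A : Matrix (Fin m) (Fin n) ℝ) (lam : Fin n → ℝ),
        Antitone lam → IsEigs (Aᵀ * A) lam →
        ∀ (δ c₁ c₂ : ℝ), 0 < δ → δ < 1 → 0 < c₁ → c₁ ≤ c₂ →
        (∀ i : Fin n,
          c₁ * (1 - δ) ^ ((i : ℕ) + 1) ≤ lam i ∧
            lam i ≤ c₂ * (1 - δ) ^ ((i : ℕ) + 1)) →
        ∀ k : ℕ, 1 ≤ k → k < n →
          kDPPExp A k (Er A) ≤ c * (c₂ / c₁) * (1 + δ * (k : ℝ)) * opt lam k := by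
  refine ⟨2, two_pos, fun m n A lam _ hlam δ c₁ c₂ hδ₀ hδ₁ hc₁ _ hband k _ hkn => ?_⟩
  have hpos : 0 < (univ.val.map lam).esymm k :=
    esymm_map_val_pos (fun i _ => (mul_pos hc₁ (pow_pos (by linarith) _)).trans_le (hband i).1)
      (by simpa using hkn.le)
  rw [kDPPExp_Er_eq hlam hkn, div_le_iff₀ hpos]
  exact succ_mul_esymm_le_of_geom_bounds hδ₀ hδ₁ hc₁ hband hkn

end CSSP
end

section
/- Expected projection matrix under DPP sampling. For any m×n real matrix A, Σ_{S ⊆ {1,...,n}} det(A_SᵀA_S)·P_S = det(I_n + AᵀA) · A(I_n + AᵀA)^{−1}Aᵀ; equivalently, if S ~ DPP(AᵀA), then E[P_S] = A(I_n + AᵀA)^{−1}Aᵀ. -/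
open scoped BigOperators
open Matrix

namespace CSSP

variable {m n : ℕ}

/-- The `m×m` orthogonal projection matrix onto the span of the columns of `A` indexed by `S`. -/
noncomputable def projMat (A : Matrix (Fin m) (Fin n) ℝ) (S : Finset (Fin n)) :
    Matrix (Fin m) (Fin m) ℝ :=
  Matrix.of fun i j =>
    (Submodule.orthogonalProjectionOnto (colSpan A S) (EuclideanSpace.single j 1) :
      EuclideanSpace ℝ (Fin m)) i

/-!
For `x y : ℝᵐ`, the matrix determinant lemma gives
`det G_S · (1 + xᵀ P_S y) = det (G_S + (A_Sᵀ y)(A_Sᵀ x)ᵀ)`, where `G_S = A_Sᵀ A_S` and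
`P_S = A_S G_S⁻¹ A_Sᵀ`. When `G_S` is singular both sides vanish: a kernel vector of `G_S`
is killed by `A_S`, hence by the rank-one update. The right side is a principal minor of
`AᵀA + (Aᵀ y)(Aᵀ x)ᵀ`, so summing over `S` with `det (1 + M) = Σ_S det M_{S,S}` gives
`xᵀ (Σ_S det G_S · P_S) y = det (1 + AᵀA + (Aᵀ y)(Aᵀ x)ᵀ) - det (1 + AᵀA)`,
which the matrix determinant lemma evaluates to `det (1 + AᵀA) · xᵀ A (1 + AᵀA)⁻¹ Aᵀ y`.
-/

section MatrixLemmas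

variable {ι κ : Type*} [Fintype ι] [Fintype κ]

theorem det_one_add_eq_sum_det_submatrix [DecidableEq ι] {R : Type*} [CommRing R]
    (M : Matrix ι ι R) :
    (1 + M).det = ∑ s : Finset ι, (M.submatrix ((↑) : s → ι) (↑)).det := by
  rw [add_comm]
  change Matrix.detRowAlternating (M.row + (1 : Matrix ι ι R).row) = _
  rw [(Matrix.detRowAlternating : (ι → R) [⋀^ι]→ₗ[R] R).map_add_univ]
  exact Finset.sum_congr rfl fun s _ => Matrix.det_piecewise_one_eq_submatrix_det M s

theorem det_one_add_transpose_mul_self_pos [DecidableEq ι] (A : Matrix κ ι ℝ) :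
    0 < (1 + Aᵀ * A).det :=
  (Matrix.PosDef.one.add_posSemidef (Matrix.posSemidef_conjTranspose_mul_self A)).det_pos

theorem det_add_vecMulVec [DecidableEq ι] {R : Type*} [CommRing R] {M : Matrix ι ι R}
    (hM : IsUnit M.det) (u v : ι → R) :
    (M + vecMulVec u v).det = M.det * (1 + v ⬝ᵥ M⁻¹ *ᵥ u) := by
  rw [vecMulVec_eq Unit, Matrix.det_add_replicateCol_mul_replicateRow hM,
    det_unique (1 + _), Matrix.add_apply, one_apply_eq, ← replicateRow_vecMul,
    replicateRow_mul_replicateCol_apply, dotProduct_mulVec]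

theorem transpose_mulVec_dotProduct_mulVec {R : Type*} [CommRing R] (B : Matrix κ ι R)
    (N : Matrix ι ι R) (x y : κ → R) :
    (Bᵀ *ᵥ x) ⬝ᵥ N *ᵥ (Bᵀ *ᵥ y) = x ⬝ᵥ (B * N * Bᵀ) *ᵥ y := by
  rw [← mulVec_mulVec, ← mulVec_mulVec, dotProduct_mulVec x B, mulVec_transpose]

theorem det_transpose_mul_self_add_vecMulVec [DecidableEq ι] (B : Matrix κ ι ℝ)
    (x y : κ → ℝ) :
    (Bᵀ * B + vecMulVec (Bᵀ *ᵥ y) (Bᵀ *ᵥ x)).det =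
      (Bᵀ * B).det * (1 + x ⬝ᵥ (B * (Bᵀ * B)⁻¹ * Bᵀ) *ᵥ y) := by
  by_cases hG : (Bᵀ * B).det = 0
  · obtain ⟨c, hc0, hc⟩ := exists_mulVec_eq_zero_iff.mpr hG
    have hBc : B *ᵥ c = 0 := (conjTranspose_mul_self_mulVec_eq_zero B c).mp hc
    have hker : (Bᵀ * B + vecMulVec (Bᵀ *ᵥ y) (Bᵀ *ᵥ x)) *ᵥ c = 0 := by
      rw [add_mulVec, hc, zero_add, vecMulVec_mulVec, mulVec_transpose, ← dotProduct_mulVec,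
        hBc, dotProduct_zero, MulOpposite.op_zero, zero_smul]
    rw [hG, zero_mul, exists_mulVec_eq_zero_iff.mp ⟨c, hc0, hker⟩]
  · rw [det_add_vecMulVec (isUnit_iff_ne_zero.mpr hG), transpose_mulVec_dotProduct_mulVec]

end MatrixLemmas

def colSubmatrix (A : Matrix (Fin m) (Fin n) ℝ) (S : Finset (Fin n)) : Matrix (Fin m) S ℝ :=
  A.submatrix id (↑)

theorem toLp_colSubmatrix_mulVec_mem_colSpan (A : Matrix (Fin m) (Fin n) ℝ)
    (S : Finset (Fin n)) (c : S → ℝ) :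
    WithLp.toLp 2 (colSubmatrix A S *ᵥ c) ∈ colSpan A S := by
  have hsum : WithLp.toLp 2 (colSubmatrix A S *ᵥ c) = ∑ j : S, c j • col A j := by
    ext i
    simp [mulVec, dotProduct, colSubmatrix, col, mul_comm]
  rw [hsum]
  exact Submodule.sum_mem _ fun j _ =>
    Submodule.smul_mem _ _ (Submodule.subset_span ⟨j, j.2, rfl⟩)

theorem starProjection_colSpan (A : Matrix (Fin m) (Fin n) ℝ) (S : Finset (Fin n))
    (hG : ((colSubmatrix A S)ᵀ * colSubmatrix A S).det ≠ 0) (x : EuclideanSpace ℝ (Fin m)) :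
    (colSpan A S).starProjection x = WithLp.toLp 2
      ((colSubmatrix A S * ((colSubmatrix A S)ᵀ * colSubmatrix A S)⁻¹ * (colSubmatrix A S)ᵀ)
        *ᵥ WithLp.ofLp x) := by
  set B := colSubmatrix A S
  refine Submodule.eq_starProjection_of_mem_of_inner_eq_zero ?_ fun w hw => ?_
  · rw [← mulVec_mulVec, ← mulVec_mulVec]
    exact toLp_colSubmatrix_mulVec_mem_colSpan A S _
  have hres : Bᵀ *ᵥ (WithLp.ofLp x - (B * (Bᵀ * B)⁻¹ * Bᵀ) *ᵥ WithLp.ofLp x) = 0 := by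
    rw [mulVec_sub, mulVec_mulVec, ← Matrix.mul_assoc, ← Matrix.mul_assoc,
      mul_nonsing_inv _ (isUnit_iff_ne_zero.mpr hG), Matrix.one_mul, sub_self]
  refine (Submodule.span_le (p := LinearMap.ker (innerₛₗ ℝ _))).mpr ?_ hw
  rintro _ ⟨j, hj, rfl⟩
  simpa [PiLp.inner_apply, col, mulVec, dotProduct, B, colSubmatrix, mul_comm, mul_sub]
    using congrFun hres ⟨j, hj⟩

theorem projMat_eq_of_det_ne_zero (A : Matrix (Fin m) (Fin n) ℝ) (S : Finset (Fin n))
    (hG : ((colSubmatrix A S)ᵀ * colSubmatrix A S).det ≠ 0) :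
    projMat A S = colSubmatrix A S * ((colSubmatrix A S)ᵀ * colSubmatrix A S)⁻¹ *
      (colSubmatrix A S)ᵀ := by
  ext i j
  change ((colSpan A S).starProjection (EuclideanSpace.single j 1)) i = _
  rw [starProjection_colSpan A S hG]
  simp

theorem pdet_add_vecMulVec_transpose_mulVec (A : Matrix (Fin m) (Fin n) ℝ)
    (S : Finset (Fin n)) (x y : Fin m → ℝ) :
    pdet (Aᵀ * A + vecMulVec (Aᵀ *ᵥ y) (Aᵀ *ᵥ x)) S =
      pdet (Aᵀ * A) S * (1 + x ⬝ᵥ projMat A S *ᵥ y) := by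
  set B := colSubmatrix A S
  change (Bᵀ * B + vecMulVec (Bᵀ *ᵥ y) (Bᵀ *ᵥ x)).det = (Bᵀ * B).det * _
  rw [det_transpose_mul_self_add_vecMulVec]
  by_cases hG : (Bᵀ * B).det = 0
  · rw [hG, zero_mul, zero_mul]
  · rw [projMat_eq_of_det_ne_zero A S hG]

theorem sum_pdet_smul_projMat (A : Matrix (Fin m) (Fin n) ℝ) :
    ∑ S : Finset (Fin n), pdet (Aᵀ * A) S • projMat A S =
      (1 + Aᵀ * A).det • (A * (1 + Aᵀ * A)⁻¹ * Aᵀ) := by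
  have hdet : IsUnit (1 + Aᵀ * A).det := (det_one_add_transpose_mul_self_pos A).ne'.isUnit
  suffices h : ∀ x y : Fin m → ℝ,
      x ⬝ᵥ (∑ S, pdet (Aᵀ * A) S • projMat A S) *ᵥ y =
        (1 + Aᵀ * A).det * x ⬝ᵥ (A * (1 + Aᵀ * A)⁻¹ * Aᵀ) *ᵥ y by
    ext i j
    simpa using h (Pi.single i 1) (Pi.single j 1)
  intro x y
  have hterm : ∀ S, x ⬝ᵥ (pdet (Aᵀ * A) S • projMat A S) *ᵥ y =
      pdet (Aᵀ * A + vecMulVec (Aᵀ *ᵥ y) (Aᵀ *ᵥ x)) S - pdet (Aᵀ * A) S := fun S => by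
    rw [pdet_add_vecMulVec_transpose_mulVec, smul_mulVec, dotProduct_smul, smul_eq_mul]
    ring
  calc x ⬝ᵥ (∑ S, pdet (Aᵀ * A) S • projMat A S) *ᵥ y
      = ∑ S, (pdet (Aᵀ * A + vecMulVec (Aᵀ *ᵥ y) (Aᵀ *ᵥ x)) S - pdet (Aᵀ * A) S) := by
        simp only [sum_mulVec, dotProduct_sum, hterm]
    _ = (1 + Aᵀ * A + vecMulVec (Aᵀ *ᵥ y) (Aᵀ *ᵥ x)).det - (1 + Aᵀ * A).det := by
        rw [Finset.sum_sub_distrib, add_assoc]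
        simp only [det_one_add_eq_sum_det_submatrix, pdet]
    _ = _ := by
        rw [det_add_vecMulVec hdet, transpose_mulVec_dotProduct_mulVec]
        ring

/-- Expected projection matrix under DPP sampling:
`Σ_S det(A_SᵀA_S)·P_S = det(I + AᵀA)·A(I + AᵀA)⁻¹Aᵀ`; equivalently, if `S ~ DPP(AᵀA)` then
`E[P_S] = A(I + AᵀA)⁻¹Aᵀ`. -/
theorem expected_projection {m n : ℕ} (A : Matrix (Fin m) (Fin n) ℝ) :
    (∑ S : Finset (Fin n), pdet (Aᵀ * A) S • projMat A S) =
        (1 + Aᵀ * A).det • (A * (1 + Aᵀ * A)⁻¹ * Aᵀ) ∧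
      ((1 + Aᵀ * A).det)⁻¹ • (∑ S : Finset (Fin n), pdet (Aᵀ * A) S • projMat A S) =
        A * (1 + Aᵀ * A)⁻¹ * Aᵀ := by
  refine ⟨sum_pdet_smul_projMat A, ?_⟩
  rw [sum_pdet_smul_projMat, smul_smul,
    inv_mul_cancel₀ (det_one_add_transpose_mul_self_pos A).ne', one_smul]

end CSSP
end

section
/- Nyström trace-norm error equals CSSP projection error. Let A be an m×n real matrix, K = AᵀA, and let S ⊆ {1,...,n} be a subset such that the |S|×|S| principal submatrix B = K_{S,S} is invertible. Let C be the n×|S| submatrix of K consisting of the columns indexed by S, and define the Nyström approximation K̂(S) = C·B^{−1}·Cᵀ. Then K − K̂(S) is positive semidefinite and tr(K − K̂(S)) = Er_A(S); consequently the trace norm satisfies ‖K − K̂(S)‖_* = Er_A(S). -/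
/-!
Let `D` be the columns of `A` indexed by `S`. Then `B = DᵀD` and `C = AᵀD`, so
`K̂(S) = Aᵀ P A` with `P = D (DᵀD)⁻¹ Dᵀ`. Since `P` is symmetric and idempotent,
`K − K̂(S) = (A − PA)ᵀ (A − PA)`, which is positive semidefinite with trace the sum of the
squared column norms of `A − PA`. Finally `P` is the orthogonal projection onto the span of the
columns indexed by `S`: it maps into that span, and `Dᵀ (x − Px) = 0`.
-/

open scoped BigOperators
open Matrix

namespace CSSP

variable {m n : ℕ}

section ProjMatrix

variable {R ι κ : Type*} [CommRing R] [Fintype ι] [Fintype κ] [DecidableEq κ]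

noncomputable def projMatrix (D : Matrix ι κ R) : Matrix ι ι R := D * (Dᵀ * D)⁻¹ * Dᵀ

lemma transpose_projMatrix (D : Matrix ι κ R) : (projMatrix D)ᵀ = projMatrix D := by
  simp only [projMatrix, transpose_mul, transpose_transpose, transpose_nonsing_inv,
    Matrix.mul_assoc]

lemma transpose_mul_projMatrix {D : Matrix ι κ R} (hD : IsUnit (Dᵀ * D).det) :
    Dᵀ * projMatrix D = Dᵀ := by
  rw [projMatrix, ← Matrix.mul_assoc, ← Matrix.mul_assoc, mul_nonsing_inv _ hD, Matrix.one_mul]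

lemma projMatrix_mul_self {D : Matrix ι κ R} (hD : IsUnit (Dᵀ * D).det) :
    projMatrix D * projMatrix D = projMatrix D := by
  calc projMatrix D * projMatrix D = D * (Dᵀ * D)⁻¹ * (Dᵀ * projMatrix D) := Matrix.mul_assoc _ _ _
    _ = projMatrix D := by rw [transpose_mul_projMatrix hD]; rfl

end ProjMatrix

lemma transpose_mul_self_sub_mul {R ι ν : Type*} [CommRing R] [Fintype ι]
    {P : Matrix ι ι R} (hPt : Pᵀ = P) (hPP : P * P = P) (A : Matrix ι ν R) :
    (A - P * A)ᵀ * (A - P * A) = Aᵀ * A - Aᵀ * (P * A) := by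
  have hPA : (P * A)ᵀ * (P * A) = Aᵀ * (P * A) := by
    rw [transpose_mul, hPt, Matrix.mul_assoc, ← Matrix.mul_assoc P, hPP]
  have hPA' : (P * A)ᵀ * A = Aᵀ * (P * A) := by
    rw [transpose_mul, hPt, Matrix.mul_assoc]
  rw [transpose_sub, Matrix.sub_mul, Matrix.mul_sub, Matrix.mul_sub, hPA, hPA']
  abel

section Euclidean

variable {ι κ : Type*}

lemma colSpan_eq_span_range_col (A : Matrix (Fin m) ι ℝ) (S : Finset ι) :
    colSpan A S = Submodule.span ℝ (Set.range (col (A.submatrix id ((↑) : S → ι)))) := by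
  rw [colSpan]
  congr 1
  ext x
  constructor
  · rintro ⟨j, hj, rfl⟩
    exact ⟨⟨j, hj⟩, rfl⟩
  · rintro ⟨s, rfl⟩
    exact ⟨s, s.2, rfl⟩

lemma toLp_mulVec_mem_span_range_col (D : Matrix (Fin m) κ ℝ) [Fintype κ] (v : κ → ℝ) :
    WithLp.toLp 2 (D *ᵥ v) ∈ Submodule.span ℝ (Set.range (col D)) := by
  have hsum : D *ᵥ v = ∑ k, v k • fun i => D i k := by
    ext i
    simp [mulVec, dotProduct, mul_comm]
  simp only [hsum, WithLp.toLp_sum, WithLp.toLp_smul]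
  exact Submodule.sum_mem _ fun k _ => Submodule.smul_mem _ _ (Submodule.subset_span ⟨k, rfl⟩)

lemma starProjection_span_range_col [Fintype κ] [DecidableEq κ] {D : Matrix (Fin m) κ ℝ}
    (hD : IsUnit (Dᵀ * D).det) (x : EuclideanSpace ℝ (Fin m)) :
    (Submodule.span ℝ (Set.range (col D))).starProjection x =
      WithLp.toLp 2 (projMatrix D *ᵥ x.ofLp) := by
  refine Submodule.eq_starProjection_of_mem_orthogonal ?_ ?_
  · rw [projMatrix, ← mulVec_mulVec, ← mulVec_mulVec]
    exact toLp_mulVec_mem_span_range_col D _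
  · rw [Submodule.mem_orthogonal']
    intro u hu
    refine Submodule.span_le (p := LinearMap.ker (innerₛₗ ℝ _)) |>.2 ?_ hu
    rintro _ ⟨k, rfl⟩
    have hperp : Dᵀ *ᵥ (x.ofLp - projMatrix D *ᵥ x.ofLp) = 0 := by
      rw [mulVec_sub, mulVec_mulVec, transpose_mul_projMatrix hD, sub_self]
    -- `⟪y, col D k⟫` unfolds to `(Dᵀ *ᵥ y) k`
    exact congrFun hperp k

lemma sum_norm_col_sq (M : Matrix (Fin m) ι ℝ) [Fintype ι] :
    ∑ j, ‖col M j‖ ^ 2 = (Mᵀ * M).trace := by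
  simp_rw [EuclideanSpace.real_norm_sq_eq]
  simp [col, trace, mul_apply, sq]

lemma Er_eq_trace [Fintype ι] [DecidableEq ι] (A : Matrix (Fin m) ι ℝ) (S : Finset ι)
    (hS : IsUnit ((A.submatrix id ((↑) : S → ι))ᵀ * A.submatrix id ((↑) : S → ι)).det) :
    Er A S = ((A - projMatrix (A.submatrix id ((↑) : S → ι)) * A)ᵀ *
      (A - projMatrix (A.submatrix id ((↑) : S → ι)) * A)).trace := by
  rw [← sum_norm_col_sq, Er]
  refine Finset.sum_congr rfl fun j _ => ?_
  simp only [Submodule.coe_orthogonalProjectionOnto_apply, colSpan_eq_span_range_col]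
  rw [starProjection_span_range_col hS]
  rfl

end Euclidean

/-- Nyström trace-norm error equals CSSP projection error: with `K = AᵀA`, `B = K_{S,S}`
invertible and `C` the columns of `K` indexed by `S`, the Nyström approximation
`K̂(S) = CB⁻¹Cᵀ` satisfies `K − K̂(S) ⪰ 0` and `tr(K − K̂(S)) = Er_A(S)` (so the trace norm of
the p.s.d. matrix `K − K̂(S)` equals `Er_A(S)`). -/
theorem nystrom_trace_error {m n : ℕ} (A : Matrix (Fin m) (Fin n) ℝ) (S : Finset (Fin n))
    (B : Matrix {x : Fin n // x ∈ S} {x : Fin n // x ∈ S} ℝ)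
    (hBdef : B = (Aᵀ * A).submatrix (fun i : {x : Fin n // x ∈ S} => (i : Fin n))
      (fun i : {x : Fin n // x ∈ S} => (i : Fin n)))
    (hB : IsUnit B.det)
    (C : Matrix (Fin n) {x : Fin n // x ∈ S} ℝ)
    (hCdef : C = (Aᵀ * A).submatrix id (fun i : {x : Fin n // x ∈ S} => (i : Fin n)))
    (Khat : Matrix (Fin n) (Fin n) ℝ) (hKhat : Khat = C * B⁻¹ * Cᵀ) :
    (Aᵀ * A - Khat).PosSemidef ∧ (Aᵀ * A - Khat).trace = Er A S := by
  set D := A.submatrix id ((↑) : S → Fin n)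
  have hBD : B = Dᵀ * D := by
    rw [hBdef, submatrix_mul _ _ _ id _ Function.bijective_id, transpose_submatrix]
  have hCD : C = Aᵀ * D := by
    rw [hCdef, submatrix_mul _ _ _ id _ Function.bijective_id]; rfl
  have hKhat' : Khat = Aᵀ * (projMatrix D * A) := by
    simp only [hKhat, hCD, hBD, projMatrix, transpose_mul, transpose_transpose,
      Matrix.mul_assoc]
  rw [hBD] at hB
  rw [hKhat', ← transpose_mul_self_sub_mul (transpose_projMatrix D) (projMatrix_mul_self hB)]
  exact ⟨posSemidef_conjTranspose_mul_self _, (Er_eq_trace A S hB).symm⟩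

end CSSP
end
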